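/- arXiv:2111.11864 — 2 statements merged into one kernel-verified Lean document; each statement's English description precedes it below -/
import Mathlib

section
/- For integer m ≥ 1, sequences of nonnegative integers a_i and c_i with c_i ≤ a_i, and complex numbers x_i, four times the unrestricted sum over tuples (k_1,...,k_m) with 0 ≤ k_i ≤ a_i of [∏ C(a_i,k_i)C(k_i,c_i)] * |∑ x_i k_i|^2 equals 2^{A_0-C_0} * [∏ C(a_i,c_i)] * (A_abs - C_abs + |A_1 + C_1|^2). -/
open Finset

lemma B0 (n : ℕ) : (∑ j ∈ range (n+1), (n.choose j : ℂ)) = 2 ^ n := by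
  have := Nat.sum_range_choose n
  exact_mod_cast congrArg (Nat.cast : ℕ → ℂ) this

lemma absorb (m k : ℕ) : ((k:ℂ)+1) * ((m+1).choose (k+1)) = (m+1) * (m.choose k) := by
  have h := Nat.add_one_mul_choose_eq m k
  have h2 : ((m+1) * m.choose k : ℂ) = (((m+1).choose (k+1) * (k+1) : ℕ) : ℂ) := by
    exact_mod_cast congrArg (Nat.cast : ℕ → ℂ) h
  push_cast at h2
  linear_combination -h2

lemma M1 (n : ℕ) : (∑ j ∈ range (n+1), (j : ℂ) * n.choose j) * 2 = n * 2 ^ n := by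
  cases n with
  | zero => simp
  | succ m =>
    rw [Finset.sum_range_succ']
    push_cast
    simp only [Nat.cast_zero, zero_mul, add_zero]
    have : ∑ k ∈ range (m+1), ((k:ℂ)+1) * ((m+1).choose (k+1)) = (m+1) * 2 ^ m := by
      rw [Finset.sum_congr rfl (fun k _ => absorb m k), ← Finset.mul_sum, B0]
    push_cast at this ⊢
    rw [this]; ring

lemma M2 (n : ℕ) : (∑ j ∈ range (n+1), (j : ℂ) * j * n.choose j) * 4 = n * (n+1) * 2 ^ n := by
  cases n with
  | zero => simp
  | succ m =>
    rw [Finset.sum_range_succ']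
    push_cast
    simp only [Nat.cast_zero, zero_mul, add_zero, mul_zero]
    have key : ∑ k ∈ range (m+1), ((k:ℂ)+1) * ((k:ℂ)+1) * ((m+1).choose (k+1))
        = (m+1) * ((∑ j ∈ range (m+1), (j : ℂ) * m.choose j) + 2 ^ m) := by
      rw [mul_add, Finset.mul_sum, ← B0, Finset.mul_sum, ← Finset.sum_add_distrib]
      refine Finset.sum_congr rfl (fun k _ => ?_)
      have := absorb m k
      linear_combination ((k:ℂ)+1) * this
    push_cast at key ⊢
    rw [key]
    have := M1 m
    linear_combination 4 * ((m:ℂ)+1) * this / 2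

lemma coordShift (c n : ℕ) (f : ℕ → ℂ) :
    ∑ k ∈ range (c+n+1), ((c+n).choose k : ℂ) * (k.choose c : ℂ) * f k
      = ((c+n).choose c : ℂ) * ∑ i ∈ range (n+1), (n.choose i : ℂ) * f (c+i) := by
  have hre : c + n + 1 = c + (n + 1) := by ring
  rw [hre, Finset.sum_range_add]
  have h1 : ∑ i ∈ range c, ((c+n).choose i : ℂ) * (i.choose c : ℂ) * f i = 0 := by
    refine Finset.sum_eq_zero fun i hi => ?_
    rw [Nat.choose_eq_zero_of_lt (Finset.mem_range.mp hi)]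
    simp
  rw [h1, zero_add, Finset.mul_sum]
  refine Finset.sum_congr rfl fun i hi => ?_
  have hin : i ≤ n := Nat.lt_succ_iff.mp (Finset.mem_range.mp hi)
  have key := Nat.choose_mul (n := c+n) (k := c+i) (s := c)
    (by omega)
  have key2 : (c+n).choose (c+i) * (c+i).choose c = (c+n).choose c * n.choose i := by
    simpa using key
  have key3 : (((c+n).choose (c+i) : ℂ)) * ((c+i).choose c : ℂ)
      = ((c+n).choose c : ℂ) * (n.choose i : ℂ) := by exact_mod_cast congrArg (Nat.cast : ℕ → ℂ) key2
  linear_combination f (c+i) * key3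

lemma F0 (A C : ℕ) (h : C ≤ A) :
    ∑ k ∈ range (A+1), ((A).choose k : ℂ) * (k.choose C : ℂ)
      = 2 ^ (A - C) * ((A).choose C : ℂ) := by
  obtain ⟨n, rfl⟩ := Nat.exists_eq_add_of_le h
  rw [Nat.add_sub_cancel_left]
  have := coordShift C n (fun _ => (1:ℂ))
  simp only [mul_one] at this
  rw [this, B0]; ring

lemma F1 (A C : ℕ) (h : C ≤ A) :
    (∑ k ∈ range (A+1), ((A).choose k : ℂ) * (k.choose C : ℂ) * (k:ℂ)) * 2
      = 2 ^ (A - C) * ((A).choose C : ℂ) * ((A:ℂ) + (C:ℂ)) := by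
  obtain ⟨n, rfl⟩ := Nat.exists_eq_add_of_le h
  rw [Nat.add_sub_cancel_left]
  rw [coordShift C n (fun t => (t:ℂ))]
  have hsplit : ∑ i ∈ range (n+1), (n.choose i : ℂ) * ((C+i : ℕ) : ℂ)
      = (C:ℂ) * (∑ i ∈ range (n+1), (n.choose i:ℂ)) + ∑ i ∈ range (n+1), (i:ℂ) * n.choose i := by
    rw [Finset.mul_sum, ← Finset.sum_add_distrib]
    exact Finset.sum_congr rfl fun i _ => by push_cast; ring
  rw [hsplit, B0]
  push_cast
  linear_combination ((C+n:ℕ).choose C : ℂ) * M1 n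

lemma F2 (A C : ℕ) (h : C ≤ A) :
    (∑ k ∈ range (A+1), ((A).choose k : ℂ) * (k.choose C : ℂ) * ((k:ℂ) * (k:ℂ))) * 4
      = 2 ^ (A - C) * ((A).choose C : ℂ) * (((A:ℂ) + (C:ℂ))^2 + ((A:ℂ) - (C:ℂ))) := by
  obtain ⟨n, rfl⟩ := Nat.exists_eq_add_of_le h
  rw [Nat.add_sub_cancel_left]
  rw [coordShift C n (fun t => (t:ℂ) * (t:ℂ))]
  have hsplit : ∑ i ∈ range (n+1), (n.choose i : ℂ) * (((C+i : ℕ) : ℂ) * ((C+i : ℕ) : ℂ))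
      = (C:ℂ)*(C:ℂ) * (∑ i ∈ range (n+1), (n.choose i:ℂ))
        + 2*(C:ℂ) * (∑ i ∈ range (n+1), (i:ℂ) * n.choose i)
        + ∑ i ∈ range (n+1), (i:ℂ) * i * n.choose i := by
    rw [Finset.mul_sum, Finset.mul_sum, ← Finset.sum_add_distrib, ← Finset.sum_add_distrib]
    exact Finset.sum_congr rfl fun i _ => by push_cast; ring
  rw [hsplit, B0]
  push_cast
  linear_combination ((C+n:ℕ).choose C : ℂ) * 4 * (C:ℂ) * M1 n + ((C+n:ℕ).choose C : ℂ) * M2 n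

lemma pairSum (m : ℕ) (a c : Fin m → ℕ) (hca : ∀ i, c i ≤ a i) (i j : Fin m) :
    (∑ k ∈ Fintype.piFinset (fun i => Finset.range (a i + 1)),
      (∏ l, ((a l).choose (k l) : ℂ) * ((k l).choose (c l) : ℂ)) * (k i : ℂ) * (k j : ℂ)) * 4
    = (∏ l, (2:ℂ) ^ (a l - c l) * ((a l).choose (c l) : ℂ))
        * (((a i : ℂ) + (c i : ℂ)) * ((a j : ℂ) + (c j : ℂ))
            + if i = j then (a i : ℂ) - (c i : ℂ) else 0) := by
  have step1 : ∀ k : Fin m → ℕ,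
      (∏ l, ((a l).choose (k l) : ℂ) * ((k l).choose (c l) : ℂ)) * (k i : ℂ) * (k j : ℂ)
      = ∏ l, (((a l).choose (k l) : ℂ) * ((k l).choose (c l) : ℂ)
          * (if i = l then (k l : ℂ) else 1) * (if j = l then (k l : ℂ) else 1)) := by
    intro k
    symm
    rw [Finset.prod_mul_distrib, Finset.prod_mul_distrib, Finset.prod_ite_eq,
      Finset.prod_ite_eq]
    simp [Finset.prod_mul_distrib, mul_assoc]
  have step2 := Finset.prod_univ_sum (fun l => Finset.range (a l + 1))
    (fun l t => ((a l).choose t : ℂ) * ((t).choose (c l) : ℂ)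
      * (if i = l then (t:ℂ) else 1) * (if j = l then (t:ℂ) else 1))
  rw [Finset.sum_congr rfl (fun k _ => step1 k), ← step2]
  by_cases hij : i = j
  · subst hij
    rw [if_pos rfl]
    rw [← Finset.mul_prod_erase univ _ (mem_univ i),
        ← Finset.mul_prod_erase univ
          (fun l => (2:ℂ) ^ (a l - c l) * ((a l).choose (c l) : ℂ)) (mem_univ i)]
    have herase : ∏ l ∈ univ.erase i,
        (∑ t ∈ range (a l + 1), ((a l).choose t : ℂ) * ((t).choose (c l) : ℂ)
          * (if i = l then (t : ℂ) else 1) * (if i = l then (t : ℂ) else 1))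
        = ∏ l ∈ univ.erase i, (2:ℂ) ^ (a l - c l) * ((a l).choose (c l) : ℂ) := by
      refine Finset.prod_congr rfl fun l hl => ?_
      have hne : i ≠ l := fun h => (Finset.mem_erase.mp hl).1 h.symm
      simp only [if_neg hne, mul_one]
      exact F0 (a l) (c l) (hca l)
    rw [herase]
    have hi : (∑ t ∈ range (a i + 1), ((a i).choose t : ℂ) * ((t).choose (c i) : ℂ)
          * (if i = i then (t : ℂ) else 1) * (if i = i then (t : ℂ) else 1)) * 4
        = 2 ^ (a i - c i) * ((a i).choose (c i) : ℂ)
            * (((a i : ℂ) + (c i : ℂ))^2 + ((a i : ℂ) - (c i : ℂ))) := by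
      rw [← F2 (a i) (c i) (hca i)]
      congr 1
      refine Finset.sum_congr rfl fun t _ => ?_
      rw [if_pos rfl]
      ring
    set P := ∏ l ∈ univ.erase i, (2:ℂ) ^ (a l - c l) * ((a l).choose (c l) : ℂ)
    linear_combination P * hi
  · have hji : ¬ (j = i) := fun h => hij h.symm
    rw [← Finset.mul_prod_erase univ _ (mem_univ i),
        ← Finset.mul_prod_erase (univ.erase i) _
          (Finset.mem_erase.mpr ⟨hji, mem_univ j⟩),
        ← Finset.mul_prod_erase univ
          (fun l => (2:ℂ) ^ (a l - c l) * ((a l).choose (c l) : ℂ)) (mem_univ i),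
        ← Finset.mul_prod_erase (univ.erase i)
          (fun l => (2:ℂ) ^ (a l - c l) * ((a l).choose (c l) : ℂ))
          (Finset.mem_erase.mpr ⟨hji, mem_univ j⟩)]
    have herase : ∏ l ∈ (univ.erase i).erase j,
        (∑ t ∈ range (a l + 1), ((a l).choose t : ℂ) * ((t).choose (c l) : ℂ)
          * (if i = l then (t : ℂ) else 1) * (if j = l then (t : ℂ) else 1))
        = ∏ l ∈ (univ.erase i).erase j, (2:ℂ) ^ (a l - c l) * ((a l).choose (c l) : ℂ) := by
      refine Finset.prod_congr rfl fun l hl => ?_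
      have h1 : j ≠ l := fun h => (Finset.mem_erase.mp hl).1 h.symm
      have h2 : i ≠ l := fun h => (Finset.mem_erase.mp (Finset.mem_erase.mp hl).2).1 h.symm
      simp only [if_neg h1, if_neg h2, mul_one]
      exact F0 (a l) (c l) (hca l)
    rw [herase]
    have hi : (∑ t ∈ range (a i + 1), ((a i).choose t : ℂ) * ((t).choose (c i) : ℂ)
          * (if i = i then (t : ℂ) else 1) * (if j = i then (t : ℂ) else 1)) * 2
        = 2 ^ (a i - c i) * ((a i).choose (c i) : ℂ) * ((a i : ℂ) + (c i : ℂ)) := by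
      rw [← F1 (a i) (c i) (hca i)]
      congr 1
      refine Finset.sum_congr rfl fun t _ => ?_
      rw [if_pos rfl, if_neg hji]
      ring
    have hj : (∑ t ∈ range (a j + 1), ((a j).choose t : ℂ) * ((t).choose (c j) : ℂ)
          * (if i = j then (t : ℂ) else 1) * (if j = j then (t : ℂ) else 1)) * 2
        = 2 ^ (a j - c j) * ((a j).choose (c j) : ℂ) * ((a j : ℂ) + (c j : ℂ)) := by
      rw [← F1 (a j) (c j) (hca j)]
      congr 1
      refine Finset.sum_congr rfl fun t _ => ?_
      rw [if_pos rfl, if_neg hij]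
      ring
    set P := ∏ l ∈ (univ.erase i).erase j, (2:ℂ) ^ (a l - c l) * ((a l).choose (c l) : ℂ)
    set Si := ∑ t ∈ range (a i + 1), ((a i).choose t : ℂ) * ((t).choose (c i) : ℂ)
          * (if i = i then (t : ℂ) else 1) * (if j = i then (t : ℂ) else 1) with hSi
    set Sj := ∑ t ∈ range (a j + 1), ((a j).choose t : ℂ) * ((t).choose (c j) : ℂ)
          * (if i = j then (t : ℂ) else 1) * (if j = j then (t : ℂ) else 1) with hSj
    rw [if_neg hij]
    linear_combination (Sj * P * 2) * hi + (2 ^ (a i - c i) * ((a i).choose (c i) : ℂ) * ((a i : ℂ) + (c i : ℂ)) * P) * hj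

lemma habs (z : ℂ) : ((‖z‖ : ℂ))^2 = z * (starRingEnd ℂ) z := by
  rw [Complex.mul_conj]
  norm_cast
  exact Complex.sq_norm z

theorem stmt16 (m : ℕ) (hm : 1 ≤ m) (a c : Fin m → ℕ) (hca : ∀ i, c i ≤ a i)
    (x : Fin m → ℂ) :
    4 * (∑ k ∈ Fintype.piFinset (fun i => Finset.range (a i + 1)), (∏ i, ((a i).choose (k i) : ℂ) * ((k i).choose (c i) : ℂ)) * (‖∑ i, x i * (k i : ℂ)‖ : ℂ) ^ 2)
      = (2 : ℂ) ^ ((∑ i, a i) - ∑ i, c i) * (∏ i, ((a i).choose (c i) : ℂ))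
        * ((∑ i, (‖x i‖ : ℂ) ^ 2 * (a i : ℂ)) - (∑ i, (‖x i‖ : ℂ) ^ 2 * (c i : ℂ)) + (‖(∑ i, x i * (a i : ℂ)) + (∑ i, x i * (c i : ℂ))‖ : ℂ) ^ 2) := by
  classical
  set K := Fintype.piFinset (fun i => Finset.range (a i + 1)) with hK
  -- expand the squared absolute value of the inner sum
  have hterm : ∀ k : Fin m → ℕ,
      ((‖∑ i, x i * (k i : ℂ)‖ : ℂ))^2
        = ∑ i, ∑ j, (x i * (starRingEnd ℂ) (x j)) * ((k i : ℂ) * (k j : ℂ)) := by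
    intro k
    rw [habs, map_sum, Finset.sum_mul_sum]
    refine Finset.sum_congr rfl fun i _ => Finset.sum_congr rfl fun j _ => ?_
    rw [map_mul, Complex.conj_natCast]
    ring
  simp only [hterm]
  -- swap sums
  have swap : 4 * (∑ k ∈ K, (∏ l, ((a l).choose (k l) : ℂ) * ((k l).choose (c l) : ℂ))
        * ∑ i, ∑ j, (x i * (starRingEnd ℂ) (x j)) * ((k i : ℂ) * (k j : ℂ)))
      = ∑ i, ∑ j, (x i * (starRingEnd ℂ) (x j))
          * ((∑ k ∈ K, (∏ l, ((a l).choose (k l) : ℂ) * ((k l).choose (c l) : ℂ))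
              * (k i : ℂ) * (k j : ℂ)) * 4) := by
    rw [Finset.mul_sum]
    simp_rw [Finset.mul_sum]
    rw [Finset.sum_comm]
    refine Finset.sum_congr rfl fun i _ => ?_
    rw [Finset.sum_comm]
    refine Finset.sum_congr rfl fun j _ => ?_
    rw [Finset.sum_mul, Finset.mul_sum]
    refine Finset.sum_congr rfl fun k _ => by ring
  rw [swap]
  have hpair : ∀ i j : Fin m,
      (x i * (starRingEnd ℂ) (x j))
          * ((∑ k ∈ K, (∏ l, ((a l).choose (k l) : ℂ) * ((k l).choose (c l) : ℂ))
              * (k i : ℂ) * (k j : ℂ)) * 4)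
      = (x i * (starRingEnd ℂ) (x j))
          * ((∏ l, (2:ℂ) ^ (a l - c l) * ((a l).choose (c l) : ℂ))
            * (((a i : ℂ) + (c i : ℂ)) * ((a j : ℂ) + (c j : ℂ))
              + if i = j then (a i : ℂ) - (c i : ℂ) else 0)) := by
    intro i j
    rw [hK, pairSum m a c hca i j]
  simp only [hpair]
  set W := ∏ l, (2:ℂ) ^ (a l - c l) * ((a l).choose (c l) : ℂ) with hWdef
  -- identify W with the closed form
  have hW : (2 : ℂ) ^ ((∑ i, a i) - ∑ i, c i) * (∏ i, ((a i).choose (c i) : ℂ)) = W := by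
    rw [hWdef, Finset.prod_mul_distrib, Finset.prod_pow_eq_pow_sum,
      Finset.sum_tsub_distrib _ (fun i _ => hca i)]
  rw [hW]
  -- rewrite RHS absolute values
  have hx : ∀ i, ((‖x i‖ : ℂ))^2 = x i * (starRingEnd ℂ) (x i) := fun i => habs (x i)
  simp only [hx]
  have hz : ((‖(∑ i, x i * (a i : ℂ)) + (∑ i, x i * (c i : ℂ))‖ : ℂ))^2
      = (∑ i, x i * ((a i : ℂ) + (c i : ℂ))) * ∑ j, (starRingEnd ℂ) (x j) * ((a j : ℂ) + (c j : ℂ)) := by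
    rw [habs]
    congr 1
    · rw [← Finset.sum_add_distrib]
      exact Finset.sum_congr rfl fun i _ => by ring
    · rw [← Finset.sum_add_distrib, map_sum]
      refine Finset.sum_congr rfl fun i _ => ?_
      rw [map_add, map_mul, map_mul, Complex.conj_natCast, Complex.conj_natCast]
      ring
  rw [hz]
  -- split the double sum into off-diagonal product part and diagonal part
  have key : ∀ i j : Fin m,
      (x i * (starRingEnd ℂ) (x j))
          * (W * (((a i : ℂ) + (c i : ℂ)) * ((a j : ℂ) + (c j : ℂ))
              + if i = j then (a i : ℂ) - (c i : ℂ) else 0))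
      = W * ((x i * ((a i : ℂ) + (c i : ℂ))) * ((starRingEnd ℂ) (x j) * ((a j : ℂ) + (c j : ℂ))))
        + (if i = j then W * (x i * (starRingEnd ℂ) (x i) * ((a i : ℂ) - (c i : ℂ))) else 0) := by
    intro i j
    by_cases h : i = j
    · subst h; rw [if_pos rfl, if_pos rfl]; ring
    · rw [if_neg h, if_neg h]; ring
  simp only [key, Finset.sum_add_distrib]
  have hdiag : ∑ i, ∑ j, (if i = j then W * (x i * (starRingEnd ℂ) (x i) * ((a i : ℂ) - (c i : ℂ))) else 0)
      = ∑ i, W * (x i * (starRingEnd ℂ) (x i) * ((a i : ℂ) - (c i : ℂ))) := by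
    refine Finset.sum_congr rfl fun i _ => ?_
    rw [Finset.sum_ite_eq univ i (fun _ => W * (x i * (starRingEnd ℂ) (x i) * ((a i : ℂ) - (c i : ℂ))))]
    simp
  rw [hdiag]
  -- final algebra
  have h1 : ∑ i, ∑ j, W * ((x i * ((a i : ℂ) + (c i : ℂ))) * ((starRingEnd ℂ) (x j) * ((a j : ℂ) + (c j : ℂ))))
      = W * ((∑ i, x i * ((a i : ℂ) + (c i : ℂ))) * ∑ j, (starRingEnd ℂ) (x j) * ((a j : ℂ) + (c j : ℂ))) := by
    rw [Finset.sum_mul_sum, Finset.mul_sum]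
    exact Finset.sum_congr rfl fun i _ => by rw [Finset.mul_sum]
  have h2 : ∑ i, W * (x i * (starRingEnd ℂ) (x i) * ((a i : ℂ) - (c i : ℂ)))
      = W * (∑ i, x i * (starRingEnd ℂ) (x i) * (a i : ℂ))
        - W * (∑ i, x i * (starRingEnd ℂ) (x i) * (c i : ℂ)) := by
    rw [Finset.mul_sum, Finset.mul_sum, ← Finset.sum_sub_distrib]
    exact Finset.sum_congr rfl fun i _ => by ring
  rw [h1, h2]
  ring
end

section
/- For integer m ≥ 1, sequences of nonnegative integers a_i and c_i with c_i ≤ a_i, and rationals x_i, eight times the unrestricted sum over tuples (k_1,...,k_m) with 0 ≤ k_i ≤ a_i of [∏ C(a_i,k_i)C(k_i,c_i)] * (∑ x_i k_i)^3 equals 2^{A_0-C_0} * [∏ C(a_i,c_i)] * (A_1 + C_1) * [(A_1 + C_1)^2 + 3(A_2 - C_2)]. -/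
open Finset

-- Pascal recursion for weighted sums
lemma pascal_sum (n : ℕ) (f : ℕ → ℚ) :
    ∑ j ∈ range (n + 2), ((n+1).choose j : ℚ) * f j
      = ∑ j ∈ range (n + 1), ((n).choose j : ℚ) * f j
        + ∑ j ∈ range (n + 1), ((n).choose j : ℚ) * f (j + 1) := by
  rw [Finset.sum_range_succ' (fun j => ((n+1).choose j : ℚ) * f j)]
  have h : ∀ j, (((n+1).choose (j+1) : ℚ)) * f (j+1)
      = (n.choose j : ℚ) * f (j+1) + (n.choose (j+1) : ℚ) * f (j+1) := by
    intro j
    rw [Nat.choose_succ_succ']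
    push_cast
    ring
  rw [Finset.sum_congr rfl (fun j _ => h j), Finset.sum_add_distrib]
  have h2 : (∑ j ∈ range (n + 1), (n.choose (j+1) : ℚ) * f (j+1)) + (n.choose 0 : ℚ) * f 0
      = ∑ j ∈ range (n + 2), (n.choose j : ℚ) * f j := by
    rw [Finset.sum_range_succ' (fun j => ((n).choose j : ℚ) * f j)]
  have h3 : ∑ j ∈ range (n + 2), (n.choose j : ℚ) * f j
      = ∑ j ∈ range (n + 1), (n.choose j : ℚ) * f j := by
    rw [Finset.sum_range_succ]
    simp [Nat.choose_eq_zero_of_lt (Nat.lt_succ_self n)]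
  simp only [Nat.choose_zero_right, Nat.cast_one, one_mul] at h2 ⊢
  linarith [h2, h3]

lemma T0 (n : ℕ) : ∑ j ∈ range (n + 1), ((n).choose j : ℚ) = 2 ^ n := by
  rw [← Nat.cast_sum, Nat.sum_range_choose]
  push_cast; ring

lemma T1 (n : ℕ) : ∑ j ∈ range (n + 1), ((n).choose j : ℚ) * j = (n : ℚ) * 2 ^ n / 2 := by
  induction n with
  | zero => simp
  | succ n ih =>
    rw [show n + 1 + 1 = n + 2 from rfl, pascal_sum n (fun j => (j : ℚ))]
    have : ∑ j ∈ range (n + 1), ((n).choose j : ℚ) * ((j : ℕ) + 1 : ℕ)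
        = ∑ j ∈ range (n + 1), (((n).choose j : ℚ) * j + ((n).choose j : ℚ)) := by
      apply Finset.sum_congr rfl; intro j _; push_cast; ring
    rw [this, Finset.sum_add_distrib, ih, T0]
    push_cast; ring

lemma T2 (n : ℕ) : ∑ j ∈ range (n + 1), ((n).choose j : ℚ) * j ^ 2
    = ((n : ℚ) ^ 2 + n) * 2 ^ n / 4 := by
  induction n with
  | zero => simp
  | succ n ih =>
    rw [show n + 1 + 1 = n + 2 from rfl, pascal_sum n (fun j => (j : ℚ) ^ 2)]
    have : ∑ j ∈ range (n + 1), ((n).choose j : ℚ) * ((j : ℕ) + 1 : ℕ) ^ 2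
        = ∑ j ∈ range (n + 1), (((n).choose j : ℚ) * j ^ 2 + 2 * (((n).choose j : ℚ) * j) + ((n).choose j : ℚ)) := by
      apply Finset.sum_congr rfl; intro j _; push_cast; ring
    rw [this, Finset.sum_add_distrib, Finset.sum_add_distrib, ← Finset.mul_sum, ih, T1, T0]
    push_cast; ring

lemma T3 (n : ℕ) : ∑ j ∈ range (n + 1), ((n).choose j : ℚ) * j ^ 3
    = (n : ℚ) ^ 2 * ((n : ℚ) + 3) * 2 ^ n / 8 := by
  induction n with
  | zero => simp
  | succ n ih =>
    rw [show n + 1 + 1 = n + 2 from rfl, pascal_sum n (fun j => (j : ℚ) ^ 3)]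
    have : ∑ j ∈ range (n + 1), ((n).choose j : ℚ) * ((j : ℕ) + 1 : ℕ) ^ 3
        = ∑ j ∈ range (n + 1), (((n).choose j : ℚ) * j ^ 3 + 3 * (((n).choose j : ℚ) * j ^ 2) + (3 * (((n).choose j : ℚ) * j) + ((n).choose j : ℚ))) := by
      apply Finset.sum_congr rfl; intro j _; push_cast; ring
    rw [this, Finset.sum_add_distrib, Finset.sum_add_distrib, Finset.sum_add_distrib,
      ← Finset.mul_sum, ← Finset.mul_sum, ih, T2, T1, T0]
    push_cast; ring

lemma shift_sum (a c : ℕ) (h : c ≤ a) (f : ℕ → ℚ) :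
    ∑ k ∈ range (a + 1), (a.choose k : ℚ) * (k.choose c : ℚ) * f k
      = (a.choose c : ℚ) * ∑ j ∈ range (a - c + 1), ((a - c).choose j : ℚ) * f (c + j) := by
  have hsplit : range (a + 1) = Finset.Ico 0 c ∪ Finset.Ico c (a + 1) := by
    rw [Finset.range_eq_Ico, Finset.Ico_union_Ico_eq_Ico (Nat.zero_le c) (by omega)]
  rw [hsplit, Finset.sum_union (by
    apply Finset.Ico_disjoint_Ico_consecutive)]
  have h0 : ∑ k ∈ Finset.Ico 0 c, (a.choose k : ℚ) * (k.choose c : ℚ) * f k = 0 := by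
    apply Finset.sum_eq_zero
    intro k hk
    simp only [Finset.mem_Ico] at hk
    rw [Nat.choose_eq_zero_of_lt hk.2]
    simp
  rw [h0, zero_add, Finset.sum_Ico_eq_sum_range]
  have hn : a + 1 - c = a - c + 1 := by omega
  rw [hn, Finset.mul_sum]
  apply Finset.sum_congr rfl
  intro j hj
  simp only [Finset.mem_range] at hj
  have hja : c + j ≤ a := by omega
  have key : a.choose (c + j) * (c + j).choose c = a.choose c * (a - c).choose j := by
    have := Nat.choose_mul (n := a) (k := c + j) (s := c) (Nat.le_add_right c j)
    simpa [Nat.add_sub_cancel_left] using this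
  have : (a.choose (c + j) : ℚ) * ((c + j).choose c : ℚ) = (a.choose c : ℚ) * ((a - c).choose j : ℚ) := by
    exact_mod_cast congrArg (Nat.cast : ℕ → ℚ) key
  rw [this, mul_assoc]

lemma single (a c : ℕ) (h : c ≤ a) (y s q : ℚ) :
    ∑ k ∈ range (a + 1), (a.choose k : ℚ) * (k.choose c : ℚ) * ((s + y * k) ^ 3 + 3 * (s + y * k) * q)
      = (2 : ℚ) ^ (a - c) * (a.choose c : ℚ) *
        ((s + y * (((a : ℚ) + (c : ℚ)) / 2)) ^ 3
          + 3 * (s + y * (((a : ℚ) + (c : ℚ)) / 2)) * (q + y ^ 2 * (((a : ℚ) - (c : ℚ)) / 4))) := by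
  rw [shift_sum a c h (fun k => (s + y * k) ^ 3 + 3 * (s + y * k) * q)]
  have hexp : ∑ j ∈ range (a - c + 1), ((a - c).choose j : ℚ) *
      ((s + y * ((c + j : ℕ) : ℚ)) ^ 3 + 3 * (s + y * ((c + j : ℕ) : ℚ)) * q)
      = ∑ j ∈ range (a - c + 1),
        (((s + y * c) ^ 3 + 3 * (s + y * c) * q) * ((a - c).choose j : ℚ)
          + ((3 * (s + y * c) ^ 2 + 3 * q) * y * (((a - c).choose j : ℚ) * j)
            + (3 * (s + y * c) * y ^ 2 * (((a - c).choose j : ℚ) * j ^ 2)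
              + y ^ 3 * (((a - c).choose j : ℚ) * j ^ 3)))) := by
    apply Finset.sum_congr rfl
    intro j _
    push_cast
    ring
  rw [hexp, Finset.sum_add_distrib, Finset.sum_add_distrib, Finset.sum_add_distrib,
    ← Finset.mul_sum, ← Finset.mul_sum, ← Finset.mul_sum, ← Finset.mul_sum,
    T0, T1, T2, T3, Nat.cast_sub h]
  ring

lemma sum_piFinset_cons {m : ℕ} (S : Fin (m + 1) → Finset ℕ) (f : (Fin (m + 1) → ℕ) → ℚ) :
    ∑ k ∈ Fintype.piFinset S, f k
      = ∑ k0 ∈ S 0, ∑ kt ∈ Fintype.piFinset (fun i => S i.succ), f (Fin.cons k0 kt) := by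
  have h := Finset.filter_piFinset_eq_map_consEquiv S (fun _ => True)
  simp only [Finset.filter_true] at h
  rw [h, Finset.sum_map, Finset.sum_product]
  rfl

lemma main (m : ℕ) : ∀ (a c : Fin m → ℕ), (∀ i, c i ≤ a i) → ∀ (x : Fin m → ℚ) (t q : ℚ),
    ∑ k ∈ Fintype.piFinset (fun i => Finset.range (a i + 1)),
      (∏ i, ((a i).choose (k i) : ℚ) * ((k i).choose (c i) : ℚ)) *
        ((t + ∑ i, x i * (k i : ℚ)) ^ 3 + 3 * (t + ∑ i, x i * (k i : ℚ)) * q)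
      = (∏ i, (2 : ℚ) ^ (a i - c i) * ((a i).choose (c i) : ℚ)) *
        ((t + ∑ i, x i * (((a i : ℚ) + (c i : ℚ)) / 2)) ^ 3
          + 3 * (t + ∑ i, x i * (((a i : ℚ) + (c i : ℚ)) / 2)) *
            (q + ∑ i, x i ^ 2 * (((a i : ℚ) - (c i : ℚ)) / 4))) := by
  induction m with
  | zero =>
    intro a c h x t q
    have hpi : (Fintype.piFinset fun i : Fin 0 => Finset.range (a i + 1))
        = {fun i => i.elim0} := by
      ext f
      simp only [Fintype.mem_piFinset, Finset.mem_singleton]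
      constructor
      · intro _; exact funext fun i => i.elim0
      · intro _ i; exact i.elim0
    rw [hpi, Finset.sum_singleton]
    simp
  | succ m ih =>
    intro a c h x t q
    rw [sum_piFinset_cons]
    have hinner : ∀ k0 ∈ Finset.range (a 0 + 1),
        (∑ kt ∈ Fintype.piFinset (fun i : Fin m => Finset.range (a i.succ + 1)),
          (∏ i, ((a i).choose ((Fin.cons k0 kt : Fin (m+1) → ℕ) i) : ℚ) *
            (((Fin.cons k0 kt : Fin (m+1) → ℕ) i).choose (c i) : ℚ)) *
            ((t + ∑ i, x i * (((Fin.cons k0 kt : Fin (m+1) → ℕ) i : ℕ) : ℚ)) ^ 3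
              + 3 * (t + ∑ i, x i * (((Fin.cons k0 kt : Fin (m+1) → ℕ) i : ℕ) : ℚ)) * q))
        = ((a 0).choose k0 : ℚ) * ((k0).choose (c 0) : ℚ) *
            ((∏ i : Fin m, (2 : ℚ) ^ (a i.succ - c i.succ) * ((a i.succ).choose (c i.succ) : ℚ)) *
            (((t + x 0 * k0 + ∑ i : Fin m, x i.succ * (((a i.succ : ℚ) + (c i.succ : ℚ)) / 2)) ^ 3)
              + 3 * (t + x 0 * k0 + ∑ i : Fin m, x i.succ * (((a i.succ : ℚ) + (c i.succ : ℚ)) / 2)) *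
                (q + ∑ i : Fin m, x i.succ ^ 2 * (((a i.succ : ℚ) - (c i.succ : ℚ)) / 4)))) := by
      intro k0 _
      have hstep : ∀ kt : Fin m → ℕ,
          (∏ i, ((a i).choose ((Fin.cons k0 kt : Fin (m+1) → ℕ) i) : ℚ) *
            (((Fin.cons k0 kt : Fin (m+1) → ℕ) i).choose (c i) : ℚ)) *
            ((t + ∑ i, x i * (((Fin.cons k0 kt : Fin (m+1) → ℕ) i : ℕ) : ℚ)) ^ 3
              + 3 * (t + ∑ i, x i * (((Fin.cons k0 kt : Fin (m+1) → ℕ) i : ℕ) : ℚ)) * q)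
          = ((a 0).choose k0 : ℚ) * ((k0).choose (c 0) : ℚ) *
            ((∏ i : Fin m, ((a i.succ).choose (kt i) : ℚ) * ((kt i).choose (c i.succ) : ℚ)) *
            (((t + x 0 * k0) + ∑ i : Fin m, x i.succ * (kt i : ℚ)) ^ 3
              + 3 * ((t + x 0 * k0) + ∑ i : Fin m, x i.succ * (kt i : ℚ)) * q)) := by
        intro kt
        rw [Fin.prod_univ_succ, Fin.sum_univ_succ]
        simp only [Fin.cons_zero, Fin.cons_succ]
        ring
      rw [Finset.sum_congr rfl (fun kt _ => hstep kt), ← Finset.mul_sum,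
        ih (fun i => a i.succ) (fun i => c i.succ) (fun i => h i.succ)
          (fun i => x i.succ) (t + x 0 * k0) q]
    rw [Finset.sum_congr rfl hinner]
    have hout : ∑ k0 ∈ Finset.range (a 0 + 1),
        ((a 0).choose k0 : ℚ) * ((k0).choose (c 0) : ℚ) *
          ((∏ i : Fin m, (2 : ℚ) ^ (a i.succ - c i.succ) * ((a i.succ).choose (c i.succ) : ℚ)) *
          ((((t + ∑ i : Fin m, x i.succ * (((a i.succ : ℚ) + (c i.succ : ℚ)) / 2)) + x 0 * k0) ^ 3)
            + 3 * ((t + ∑ i : Fin m, x i.succ * (((a i.succ : ℚ) + (c i.succ : ℚ)) / 2)) + x 0 * k0) *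
              (q + ∑ i : Fin m, x i.succ ^ 2 * (((a i.succ : ℚ) - (c i.succ : ℚ)) / 4))))
        = (∏ i : Fin m, (2 : ℚ) ^ (a i.succ - c i.succ) * ((a i.succ).choose (c i.succ) : ℚ)) *
          ∑ k0 ∈ Finset.range (a 0 + 1),
            ((a 0).choose k0 : ℚ) * ((k0).choose (c 0) : ℚ) *
            ((((t + ∑ i : Fin m, x i.succ * (((a i.succ : ℚ) + (c i.succ : ℚ)) / 2)) + x 0 * k0) ^ 3)
              + 3 * (((t + ∑ i : Fin m, x i.succ * (((a i.succ : ℚ) + (c i.succ : ℚ)) / 2)) + x 0 * k0)) *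
                (q + ∑ i : Fin m, x i.succ ^ 2 * (((a i.succ : ℚ) - (c i.succ : ℚ)) / 4))) := by
      rw [Finset.mul_sum]
      apply Finset.sum_congr rfl
      intro k0 _
      ring
    have hshape : ∀ k0 ∈ Finset.range (a 0 + 1),
        ((a 0).choose k0 : ℚ) * ((k0).choose (c 0) : ℚ) *
          ((∏ i : Fin m, (2 : ℚ) ^ (a i.succ - c i.succ) * ((a i.succ).choose (c i.succ) : ℚ)) *
          (((t + x 0 * k0 + ∑ i : Fin m, x i.succ * (((a i.succ : ℚ) + (c i.succ : ℚ)) / 2)) ^ 3)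
            + 3 * (t + x 0 * k0 + ∑ i : Fin m, x i.succ * (((a i.succ : ℚ) + (c i.succ : ℚ)) / 2)) *
              (q + ∑ i : Fin m, x i.succ ^ 2 * (((a i.succ : ℚ) - (c i.succ : ℚ)) / 4))))
        = ((a 0).choose k0 : ℚ) * ((k0).choose (c 0) : ℚ) *
          ((∏ i : Fin m, (2 : ℚ) ^ (a i.succ - c i.succ) * ((a i.succ).choose (c i.succ) : ℚ)) *
          ((((t + ∑ i : Fin m, x i.succ * (((a i.succ : ℚ) + (c i.succ : ℚ)) / 2)) + x 0 * k0) ^ 3)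
            + 3 * ((t + ∑ i : Fin m, x i.succ * (((a i.succ : ℚ) + (c i.succ : ℚ)) / 2)) + x 0 * k0) *
              (q + ∑ i : Fin m, x i.succ ^ 2 * (((a i.succ : ℚ) - (c i.succ : ℚ)) / 4)))) := by
      intro k0 _; ring
    rw [Finset.sum_congr rfl hshape, hout,
      single (a 0) (c 0) (h 0) (x 0)
        (t + ∑ i : Fin m, x i.succ * (((a i.succ : ℚ) + (c i.succ : ℚ)) / 2))
        (q + ∑ i : Fin m, x i.succ ^ 2 * (((a i.succ : ℚ) - (c i.succ : ℚ)) / 4)),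
      Fin.prod_univ_succ, Fin.sum_univ_succ (fun i => x i * (((a i : ℚ) + (c i : ℚ)) / 2)),
      Fin.sum_univ_succ (fun i => x i ^ 2 * (((a i : ℚ) - (c i : ℚ)) / 4))]
    ring

theorem stmt18 (m : ℕ) (hm : 1 ≤ m) (a c : Fin m → ℕ) (hca : ∀ i, c i ≤ a i)
    (x : Fin m → ℚ) :
    8 * (∑ k ∈ Fintype.piFinset (fun i => Finset.range (a i + 1)), (∏ i, ((a i).choose (k i) : ℚ) * ((k i).choose (c i) : ℚ)) * (∑ i, x i * (k i : ℚ)) ^ 3)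
      = (2 : ℚ) ^ ((∑ i, a i) - ∑ i, c i) * (∏ i, ((a i).choose (c i) : ℚ)) * ((∑ i, x i * (a i : ℚ)) + (∑ i, x i * (c i : ℚ))) * (((∑ i, x i * (a i : ℚ)) + (∑ i, x i * (c i : ℚ))) ^ 2 + 3 * ((∑ i, x i ^ 2 * (a i : ℚ)) - (∑ i, x i ^ 2 * (c i : ℚ)))) := by
  have hL : ∑ k ∈ Fintype.piFinset (fun i => Finset.range (a i + 1)),
      (∏ i, ((a i).choose (k i) : ℚ) * ((k i).choose (c i) : ℚ)) * (∑ i, x i * (k i : ℚ)) ^ 3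
      = ∑ k ∈ Fintype.piFinset (fun i => Finset.range (a i + 1)),
        (∏ i, ((a i).choose (k i) : ℚ) * ((k i).choose (c i) : ℚ)) *
          ((0 + ∑ i, x i * (k i : ℚ)) ^ 3 + 3 * (0 + ∑ i, x i * (k i : ℚ)) * 0) := by
    apply Finset.sum_congr rfl; intro k _; ring
  rw [hL, main m a c hca x 0 0]
  have hW : (∏ i, (2 : ℚ) ^ (a i - c i) * ((a i).choose (c i) : ℚ))
      = (2 : ℚ) ^ ((∑ i, a i) - ∑ i, c i) * (∏ i, ((a i).choose (c i) : ℚ)) := by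
    rw [Finset.prod_mul_distrib, Finset.prod_pow_eq_pow_sum,
      Finset.sum_tsub_distrib _ (fun i _ => hca i)]
  have hP : (∑ i, x i * (a i : ℚ)) + (∑ i, x i * (c i : ℚ))
      = 2 * ∑ i, x i * (((a i : ℚ) + (c i : ℚ)) / 2) := by
    rw [← Finset.sum_add_distrib, Finset.mul_sum]
    apply Finset.sum_congr rfl; intro i _; ring
  have hQ : (∑ i, x i ^ 2 * (a i : ℚ)) - (∑ i, x i ^ 2 * (c i : ℚ))
      = 4 * ∑ i, x i ^ 2 * (((a i : ℚ) - (c i : ℚ)) / 4) := by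
    rw [← Finset.sum_sub_distrib, Finset.mul_sum]
    apply Finset.sum_congr rfl; intro i _; ring
  rw [hW, hP, hQ]
  ring
end
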